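/- arXiv:0706.0970 — 4 statements merged into one kernel-verified Lean document; each statement's English description precedes it below -/
import Mathlib

section
/- Let h = k ⊕ k be the direct sum of two copies of the two-dimensional non-abelian Lie algebra, with basis e₁,e₂,e₃,e₄ and nonzero brackets [e₁,e₂]=e₂, [e₃,e₄]=e₄. Then the alternating bilinear form ω on h with ω(e₁,e₃)=1 and all other basis pairings zero is a 2-cocycle with trivial coefficients ℝ which is not a coboundary; in particular H²(h,ℝ) ≠ {0}. -/
/-!
Every bracket of `h` lies in the derived algebra `span {e₂, e₄}`, and `ω` vanishes as soon as one
argument lies there; so each term of the cocycle identity is zero. On the other hand `e₁` and `e₃`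
commute, so a coboundary `c ⁅·, ·⁆` vanishes on `(e₁, e₃)`, where `ω` takes the value `1`.
-/

namespace LieAlgebra

variable {R L : Type*} [CommRing R] [LieRing L] [LieAlgebra R L]

theorem comp_lie_eq_zero_of_basis {ι : Type*} (b : Module.Basis ι R L)
    (ω : L →ₗ[R] L →ₗ[R] R) (h : ∀ i j, ω ⁅b i, b j⁆ = 0) (x y : L) : ω ⁅x, y⁆ = 0 := by
  have : (LieModule.toEnd R L L : L →ₗ[R] Module.End R L).compr₂ ω = 0 :=
    LinearMap.ext_basis b b fun i j => h i j
  exact LinearMap.congr_fun₂ this x y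

theorem comp_lie_eq_zero_of_basis_of_lt {ι : Type*} [LinearOrder ι]
    (b : Module.Basis ι R L) (ω : L →ₗ[R] L →ₗ[R] R) (h : ∀ i j, i < j → ω ⁅b i, b j⁆ = 0)
    (x y : L) : ω ⁅x, y⁆ = 0 := by
  refine comp_lie_eq_zero_of_basis b ω (fun i j => ?_) x y
  rcases lt_trichotomy i j with hij | rfl | hji
  · exact h i j hij
  · rw [lie_self, map_zero]
  · rw [← lie_skew, map_neg, h j i hji, neg_zero]

theorem cocycle_of_comp_lie_eq_zero (ω : L →ₗ[R] L →ₗ[R] R)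
    (h : ∀ x y : L, ω ⁅x, y⁆ = 0) (x y z : L) :
    ω ⁅x, y⁆ z + ω ⁅y, z⁆ x + ω ⁅z, x⁆ y = 0 := by
  simp only [h, LinearMap.zero_apply, add_zero]

theorem not_exists_eq_comp_lie_of_lie_eq_zero (ω : L →ₗ[R] L →ₗ[R] R) {x y : L}
    (hxy : ⁅x, y⁆ = 0) (hω : ω x y ≠ 0) :
    ¬ ∃ c : L →ₗ[R] R, ∀ x y : L, ω x y = c ⁅x, y⁆ := by
  rintro ⟨c, hc⟩
  exact hω (by rw [hc, hxy, map_zero])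

end LieAlgebra

/-- Let `h = k ⊕ k` be the 4-dimensional real Lie algebra with
basis `e₁,…,e₄` and nonzero brackets `⁅e₁,e₂⁆ = e₂`, `⁅e₃,e₄⁆ = e₄` (all other
basis brackets zero).  The alternating bilinear form `ω` with `ω(e₁,e₃) = 1`
and all other basis pairings zero is a 2-cocycle with trivial coefficients `ℝ`
which is not a coboundary; in particular `H²(h,ℝ) ≠ {0}`. -/
theorem stmt_6 (H : Type) [LieRing H] [LieAlgebra ℝ H]
    (b : Module.Basis (Fin 4) ℝ H)
    (h12 : ⁅b 0, b 1⁆ = b 1) (h34 : ⁅b 2, b 3⁆ = b 3)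
    (h13 : ⁅b 0, b 2⁆ = 0) (h14 : ⁅b 0, b 3⁆ = 0)
    (h23 : ⁅b 1, b 2⁆ = 0) (h24 : ⁅b 1, b 3⁆ = 0)
    (ω : H →ₗ[ℝ] H →ₗ[ℝ] ℝ) (halt : ∀ x : H, ω x x = 0)
    (hω13 : ω (b 0) (b 2) = 1)
    (hω12 : ω (b 0) (b 1) = 0) (hω14 : ω (b 0) (b 3) = 0)
    (hω23 : ω (b 1) (b 2) = 0) (hω24 : ω (b 1) (b 3) = 0)
    (hω34 : ω (b 2) (b 3) = 0) :
    (∀ x y z : H, ω ⁅x, y⁆ z + ω ⁅y, z⁆ x + ω ⁅z, x⁆ y = 0) ∧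
    ¬ ∃ c : H →ₗ[ℝ] ℝ, ∀ x y : H, ω x y = c ⁅x, y⁆ := by
  have hω : ω.IsAlt := halt
  have hω1 : ω (b 1) = 0 := b.ext fun i => by
    fin_cases i
    exacts [hω.eq_iff.mp hω12, hω _, hω23, hω24]
  have hω3 : ω (b 3) = 0 := b.ext fun i => by
    fin_cases i
    exacts [hω.eq_iff.mp hω14, hω.eq_iff.mp hω24, hω.eq_iff.mp hω34, hω _]
  have hlie : ∀ x y : H, ω ⁅x, y⁆ = 0 := by
    refine LieAlgebra.comp_lie_eq_zero_of_basis_of_lt b ω fun i j hij => ?_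
    fin_cases i <;> fin_cases j <;> first
      | exact absurd hij (by decide)
      | simp [h12, h13, h14, h23, h24, h34, hω1, hω3]
  exact ⟨LieAlgebra.cocycle_of_comp_lie_eq_zero ω hlie,
    LieAlgebra.not_exists_eq_comp_lie_of_lie_eq_zero ω h13 (hω13 ▸ one_ne_zero)⟩
end

section
/- Let g and h be finite-dimensional real Lie algebras, let Ψ ∈ C^∞(g*) be a Casimir function for the linear (Lie–Poisson) structure on g* (i.e. {x, Ψ} = 0 for all linear functions x on g*), and let C be a 2-cocycle on h with trivial real coefficients. Then the bivector π on (g ⊕ h)* given in linear coordinates xⁱ on g* and yᵃ on h* by π^{ij} = x^k g^{ij}_k (the Lie–Poisson structure of g), π^{ai} = 0, and π^{ab} = y^c h^{ab}_c + Ψ(x) C^{ab}, satisfies the Jacobi identity, i.e. defines a Poisson structure. -/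
/-!
The Jacobiator of `π` is computed block by block. With three `g`-indices it is the Jacobi identity
of `g`. With two `g`-indices every term vanishes, because `π^{ij}` does not depend on `y` and
`π^{ai} = 0`. With one `g`-index `i` the only surviving term is `∑ₜ π^{ti} ∂ₜΨ · C^{bc}`, which is
`±{xⁱ, Ψ} C^{bc} = 0` since `Ψ` is a Casimir. With three `h`-indices the `x`-derivatives of `Ψ` only
meet the vanishing `π^{ta}`, so `Ψ(x)` acts as a constant `ψ` and the Jacobiator is that of the
affine bivector `y_c h^{ab}_c + ψ C^{ab}`: the Jacobi identity of `h` plus `ψ` times the cocycle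
condition.
-/

open Finset

section Derivatives

variable {ι κ : Type*} [Fintype ι] [Fintype κ]

theorem hasFDerivAt_sum_mul_apply (c : κ → ℝ) (e : κ → ι) (x : ι → ℝ) :
    HasFDerivAt (fun y : ι → ℝ => ∑ l, c l * y (e l))
      (∑ l, c l • ContinuousLinearMap.proj (R := ℝ) (φ := fun _ : ι => ℝ) (e l)) x :=
  HasFDerivAt.fun_sum fun l _ => (hasFDerivAt_apply (e l) x).const_mul (c l)

theorem fderiv_sum_mul_apply (c : κ → ℝ) (e : κ → ι) (x v : ι → ℝ) :
    fderiv ℝ (fun y : ι → ℝ => ∑ l, c l * y (e l)) x v = ∑ l, c l * v (e l) := by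
  simp [(hasFDerivAt_sum_mul_apply c e x).fderiv]

theorem hasFDerivAt_comp_reindex {Ψ : (κ → ℝ) → ℝ} (e : κ → ι) {x : ι → ℝ}
    (hΨ : DifferentiableAt ℝ Ψ (fun l => x (e l))) :
    HasFDerivAt (fun y : ι → ℝ => Ψ (fun l => y (e l)))
      ((fderiv ℝ Ψ (fun l => x (e l))).comp
        (ContinuousLinearMap.pi fun l => ContinuousLinearMap.proj (e l))) x :=
  hΨ.hasFDerivAt.comp x (hasFDerivAt_pi.2 fun l => hasFDerivAt_apply (e l) x)

end Derivatives

section StructureConstants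

variable {ι : Type*} [Fintype ι]

theorem linearPoisson_jacobi (g : ι → ι → ι → ℝ)
    (hgjac : ∀ i j k t, ∑ s, (g i j s * g s k t + g j k s * g s i t + g k i s * g s j t) = 0)
    (x : ι → ℝ) (i j k : ι) :
    ∑ s, ((∑ l, g s i l * x l) * g j k s + (∑ l, g s j l * x l) * g k i s
      + (∑ l, g s k l * x l) * g i j s) = 0 := by
  simp only [sum_mul, ← sum_add_distrib]
  rw [sum_comm]
  refine sum_eq_zero fun l _ => ?_
  calc ∑ s, (g s i l * x l * g j k s + g s j l * x l * g k i s + g s k l * x l * g i j s)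
      = x l * ∑ s, (g i j s * g s k l + g j k s * g s i l + g k i s * g s j l) := by
        rw [mul_sum]; exact sum_congr rfl fun s _ => by ring
    _ = 0 := by rw [hgjac, mul_zero]

theorem affinePoisson_jacobi (h : ι → ι → ι → ℝ)
    (hhjac : ∀ a b c t, ∑ s, (h a b s * h s c t + h b c s * h s a t + h c a s * h s b t) = 0)
    (C : ι → ι → ℝ) (hCanti : ∀ a b, C a b = - C b a)
    (hCcoc : ∀ a b c, ∑ d, (C a d * h b c d + C b d * h c a d + C c d * h a b d) = 0)
    (y : ι → ℝ) (ψ : ℝ) (a b c : ι) :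
    ∑ d, ((∑ e, h d a e * y e + ψ * C d a) * h b c d + (∑ e, h d b e * y e + ψ * C d b) * h c a d
      + (∑ e, h d c e * y e + ψ * C d c) * h a b d) = 0 := by
  calc _ = ∑ d, ((∑ e, h d a e * y e) * h b c d + (∑ e, h d b e * y e) * h c a d
          + (∑ e, h d c e * y e) * h a b d)
        - ψ * ∑ d, (C a d * h b c d + C b d * h c a d + C c d * h a b d) := by
        rw [mul_sum, ← sum_sub_distrib]
        exact sum_congr rfl fun d _ => by rw [hCanti d a, hCanti d b, hCanti d c]; ring
    _ = 0 := by rw [linearPoisson_jacobi h hhjac, hCcoc, mul_zero, sub_zero]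

theorem sum_linearPoisson_mul_fderiv_eq_zero_of_casimir [DecidableEq ι] (g : ι → ι → ι → ℝ)
    (hganti : ∀ i j k, g i j k = - g j i k) (Ψ : (ι → ℝ) → ℝ) (x : ι → ℝ) (i : ι)
    (hΨcas : ∑ j, (∑ l, g i j l * x l) * fderiv ℝ Ψ x (Pi.single j 1) = 0) :
    ∑ s, (∑ l, g s i l * x l) * fderiv ℝ Ψ x (Pi.single s 1) = 0 := by
  simpa [hganti _ i, sum_neg_distrib] using hΨcas

end StructureConstants

section Bivector

variable {ι κ : Type*} [Fintype ι] [Fintype κ]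

def extensionBivector (g : ι → ι → ι → ℝ) (h : κ → κ → κ → ℝ) (C : κ → κ → ℝ)
    (Ψ : (ι → ℝ) → ℝ) : ι ⊕ κ → ι ⊕ κ → (ι ⊕ κ → ℝ) → ℝ
  | .inl i, .inl j, x => ∑ k, g i j k * x (.inl k)
  | .inr a, .inr b, x => (∑ c, h a b c * x (.inr c)) + Ψ (fun i => x (.inl i)) * C a b
  | .inl _, .inr _, _ => 0
  | .inr _, .inl _, _ => 0

variable (g : ι → ι → ι → ℝ) (h : κ → κ → κ → ℝ) (C : κ → κ → ℝ) (Ψ : (ι → ℝ) → ℝ)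

theorem extensionBivector_inl_inr (i : ι) (a : κ) :
    extensionBivector g h C Ψ (.inl i) (.inr a) = fun _ => 0 := rfl

theorem extensionBivector_inr_inl (a : κ) (i : ι) :
    extensionBivector g h C Ψ (.inr a) (.inl i) = fun _ => 0 := rfl

theorem fderiv_extensionBivector_inr_inr (hΨ : Differentiable ℝ Ψ) (a b : κ)
    (x v : ι ⊕ κ → ℝ) :
    fderiv ℝ (extensionBivector g h C Ψ (.inr a) (.inr b)) x v =
      ∑ c, h a b c * v (.inr c)
        + fderiv ℝ Ψ (fun i => x (.inl i)) (fun i => v (.inl i)) * C a b := by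
  have hB := (hasFDerivAt_sum_mul_apply (h a b) Sum.inr x).add
    ((hasFDerivAt_comp_reindex Sum.inl (hΨ _)).mul_const (C a b))
  rw [HasFDerivAt.fderiv (f := extensionBivector g h C Ψ (.inr a) (.inr b)) hB]
  simp [mul_comm]

variable [DecidableEq ι] [DecidableEq κ]

theorem fderiv_extensionBivector_inl_inl_single (i j : ι) (x : ι ⊕ κ → ℝ) (s : ι ⊕ κ) :
    fderiv ℝ (extensionBivector g h C Ψ (.inl i) (.inl j)) x (Pi.single s 1) =
      Sum.elim (g i j) 0 s := by
  change fderiv ℝ (fun y : ι ⊕ κ → ℝ => ∑ k, g i j k * y (.inl k)) x _ = _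
  rcases s with t | c <;> simp [fderiv_sum_mul_apply, Pi.single_apply]

theorem fderiv_extensionBivector_inr_inr_single (hΨ : Differentiable ℝ Ψ) (a b : κ)
    (x : ι ⊕ κ → ℝ) (s : ι ⊕ κ) :
    fderiv ℝ (extensionBivector g h C Ψ (.inr a) (.inr b)) x (Pi.single s 1) =
      Sum.elim (fun t => fderiv ℝ Ψ (fun i => x (.inl i)) (Pi.single t 1) * C a b) (h a b) s := by
  rw [fderiv_extensionBivector_inr_inr g h C Ψ hΨ]
  rcases s with t | c
  · have : (fun i => (Pi.single (.inl t) 1 : ι ⊕ κ → ℝ) (.inl i)) = Pi.single t 1 := by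
      ext i; simp [Pi.single_apply]
    rw [this]
    simp
  · have : (fun i => (Pi.single (.inr c) 1 : ι ⊕ κ → ℝ) (.inl i)) = 0 := by
      ext i; simp
    rw [this]
    simp [Pi.single_apply]

theorem extensionBivector_jacobi (hganti : ∀ i j k, g i j k = - g j i k)
    (hgjac : ∀ i j k t, ∑ s, (g i j s * g s k t + g j k s * g s i t + g k i s * g s j t) = 0)
    (hhjac : ∀ a b c t, ∑ s, (h a b s * h s c t + h b c s * h s a t + h c a s * h s b t) = 0)
    (hCanti : ∀ a b, C a b = - C b a)
    (hCcoc : ∀ a b c, ∑ d, (C a d * h b c d + C b d * h c a d + C c d * h a b d) = 0)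
    (hΨ : Differentiable ℝ Ψ)
    (hΨcas : ∀ x k, ∑ j, (∑ l, g k j l * x l) * fderiv ℝ Ψ x (Pi.single j 1) = 0)
    (x : ι ⊕ κ → ℝ) (i j k : ι ⊕ κ) :
    ∑ s, (extensionBivector g h C Ψ s i x *
          fderiv ℝ (extensionBivector g h C Ψ j k) x (Pi.single s 1)
        + extensionBivector g h C Ψ s j x *
          fderiv ℝ (extensionBivector g h C Ψ k i) x (Pi.single s 1)
        + extensionBivector g h C Ψ s k x *
          fderiv ℝ (extensionBivector g h C Ψ i j) x (Pi.single s 1)) = 0 := by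
  have casimir (i : ι) (K : ℝ) : ∑ t, (∑ l, g t i l * x (.inl l)) *
      (fderiv ℝ Ψ (fun l => x (.inl l)) (Pi.single t 1) * K) = 0 := by
    simp only [← mul_assoc, ← sum_mul,
      sum_linearPoisson_mul_fderiv_eq_zero_of_casimir g hganti Ψ _ i (hΨcas _ i), zero_mul]
  rcases i with i | a <;> rcases j with j | b <;> rcases k with k | c <;>
    simp only [Fintype.sum_sum_type, extensionBivector, extensionBivector_inl_inr,
      extensionBivector_inr_inl, fderiv_extensionBivector_inl_inl_single,
      fderiv_extensionBivector_inr_inr_single g h C Ψ hΨ, fderiv_fun_const, Pi.zero_apply,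
      zero_apply, Sum.elim_inl, Sum.elim_inr,
      zero_mul, mul_zero, add_zero, zero_add, sum_const_zero]
  exacts [linearPoisson_jacobi g hgjac _ i j k, casimir i (C b c), casimir j (C c a),
    casimir k (C a b), affinePoisson_jacobi h hhjac C hCanti hCcoc _ _ a b c]

end Bivector

theorem stmt_8_general (m p : ℕ)
    (g : Fin m → Fin m → Fin m → ℝ) (h : Fin p → Fin p → Fin p → ℝ)
    (hganti : ∀ i j k, g i j k = - g j i k)
    (hgjac : ∀ i j k t, ∑ s, (g i j s * g s k t + g j k s * g s i t + g k i s * g s j t) = 0)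
    (hhjac : ∀ a b c t, ∑ s, (h a b s * h s c t + h b c s * h s a t + h c a s * h s b t) = 0)
    (C : Fin p → Fin p → ℝ) (hCanti : ∀ a b, C a b = - C b a)
    (hCcoc : ∀ a b c, ∑ d, (C a d * h b c d + C b d * h c a d + C c d * h a b d) = 0)
    (Ψ : (Fin m → ℝ) → ℝ) (hΨdiff : Differentiable ℝ Ψ)
    (hΨcas : ∀ (x : Fin m → ℝ) (k : Fin m),
      ∑ j, (∑ l, g k j l * x l) * fderiv ℝ Ψ x (Pi.single j 1) = 0)
    (π : (Fin m ⊕ Fin p) → (Fin m ⊕ Fin p) → ((Fin m ⊕ Fin p) → ℝ) → ℝ)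
    (hπgg : ∀ i j x, π (Sum.inl i) (Sum.inl j) x = ∑ k, g i j k * x (Sum.inl k))
    (hπgh : ∀ i a x, π (Sum.inl i) (Sum.inr a) x = 0)
    (hπhg : ∀ a i x, π (Sum.inr a) (Sum.inl i) x = 0)
    (hπhh : ∀ a b x, π (Sum.inr a) (Sum.inr b) x =
      (∑ c, h a b c * x (Sum.inr c)) + Ψ (fun i => x (Sum.inl i)) * C a b) :
    ∀ (x : (Fin m ⊕ Fin p) → ℝ) (i j k : Fin m ⊕ Fin p),
      ∑ s, (π s i x * fderiv ℝ (π j k) x (Pi.single s 1)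
          + π s j x * fderiv ℝ (π k i) x (Pi.single s 1)
          + π s k x * fderiv ℝ (π i j) x (Pi.single s 1)) = 0 := by
  obtain rfl : π = extensionBivector g h C Ψ := by
    funext a b x
    rcases a with i | a <;> rcases b with j | b
    exacts [hπgg i j x, hπgh i b x, hπhg a j x, hπhh a b x]
  exact extensionBivector_jacobi g h C Ψ hganti hgjac hhjac hCanti hCcoc hΨdiff hΨcas

/-- Let `g`, `h` be finite-dimensional real Lie algebras given by
structure constants `g i j k`, `h a b c` (antisymmetric, satisfying the Jacobi
identity), let `Ψ` be a differentiable Casimir function for the Lie–Poisson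
structure on `g*` (`{xᵏ,Ψ} = 0`), and let `C` be an (antisymmetric) 2-cocycle
on `h` with trivial real coefficients.  Then the bivector `π` on
`(g ⊕ h)* ≅ ℝ^{m+p}` (coordinates indexed by `Fin m ⊕ Fin p`) with components
`π^{ij} = gᵢⱼᵏ xₖ`, `π^{ai} = 0`, `π^{ab} = hₐᵦᶜ y_c + Ψ(x) C^{ab}` satisfies
the Jacobi identity `Σ_s (π^{si} ∂_s π^{jk} + π^{sj} ∂_s π^{ki} + π^{sk} ∂_s π^{ij}) = 0`,
i.e. defines a Poisson structure. -/
theorem stmt_8 (m p : ℕ)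
    (g : Fin m → Fin m → Fin m → ℝ) (h : Fin p → Fin p → Fin p → ℝ)
    (hganti : ∀ i j k, g i j k = - g j i k)
    (hhanti : ∀ a b c, h a b c = - h b a c)
    (hgjac : ∀ i j k t, ∑ s, (g i j s * g s k t + g j k s * g s i t + g k i s * g s j t) = 0)
    (hhjac : ∀ a b c t, ∑ s, (h a b s * h s c t + h b c s * h s a t + h c a s * h s b t) = 0)
    (C : Fin p → Fin p → ℝ) (hCanti : ∀ a b, C a b = - C b a)
    (hCcoc : ∀ a b c, ∑ d, (C a d * h b c d + C b d * h c a d + C c d * h a b d) = 0)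
    (Ψ : (Fin m → ℝ) → ℝ) (hΨdiff : Differentiable ℝ Ψ)
    (hΨcas : ∀ (x : Fin m → ℝ) (k : Fin m),
      ∑ j, (∑ l, g k j l * x l) * fderiv ℝ Ψ x (Pi.single j 1) = 0)
    (π : (Fin m ⊕ Fin p) → (Fin m ⊕ Fin p) → ((Fin m ⊕ Fin p) → ℝ) → ℝ)
    (hπgg : ∀ i j x, π (Sum.inl i) (Sum.inl j) x = ∑ k, g i j k * x (Sum.inl k))
    (hπgh : ∀ i a x, π (Sum.inl i) (Sum.inr a) x = 0)
    (hπhg : ∀ a i x, π (Sum.inr a) (Sum.inl i) x = 0)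
    (hπhh : ∀ a b x, π (Sum.inr a) (Sum.inr b) x =
      (∑ c, h a b c * x (Sum.inr c)) + Ψ (fun i => x (Sum.inl i)) * C a b) :
    ∀ (x : (Fin m ⊕ Fin p) → ℝ) (i j k : Fin m ⊕ Fin p),
      ∑ s, (π s i x * fderiv ℝ (π j k) x (Pi.single s 1)
          + π s j x * fderiv ℝ (π k i) x (Pi.single s 1)
          + π s k x * fderiv ℝ (π i j) x (Pi.single s 1)) = 0 :=
  stmt_8_general m p g h hganti hgjac hhjac C hCanti hCcoc Ψ hΨdiff hΨcas π hπgg hπgh hπhg hπhh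
end

section
/- Let A = C^∞(ℝⁿ) and let φ₁(f) = Σ_k D₁^k (∂_k f)(0). Suppose φ₂ : A → ℝ is a differential operator at 0 (finite linear combination of partial derivatives at 0) satisfying φ₂(fg) = φ₁(f)φ₁(g) + φ₂(f) g(0) + f(0) φ₂(g) for all f,g. Then φ₂(f) = (1/2) Σ_{i,j} D₁^i D₁^j (∂_i∂_j f)(0) + Σ_i D₂^i (∂_i f)(0) for some constants D₂^i. -/
/-- Partial derivative in the `i`-th coordinate direction. -/
noncomputable def pd {n : ℕ} (i : Fin n) (f : (Fin n → ℝ) → ℝ) :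
    (Fin n → ℝ) → ℝ :=
  fun x => fderiv ℝ f x (Pi.single i 1)

/-- Multi-index partial derivative `∂^I`. -/
noncomputable def mder {n : ℕ} (I : Fin n → ℕ) (f : (Fin n → ℝ) → ℝ) :
    (Fin n → ℝ) → ℝ :=
  (List.finRange n).foldr (fun i gcur => (pd i)^[I i] gcur) f

variable {n : ℕ}

lemma contDiff_pd (i : Fin n) {f : (Fin n → ℝ) → ℝ} (hf : ContDiff ℝ (⊤ : ℕ∞) f) :
    ContDiff ℝ (⊤ : ℕ∞) (pd i f) := by
  have h : ContDiff ℝ (⊤ : ℕ∞) (fderiv ℝ f) := hf.fderiv_right (by simp)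
  exact (ContinuousLinearMap.apply ℝ ℝ (Pi.single i 1 : Fin n → ℝ)).contDiff.comp h

lemma diff_of_top {f : (Fin n → ℝ) → ℝ} (hf : ContDiff ℝ (⊤ : ℕ∞) f) : Differentiable ℝ f :=
  hf.differentiable (by simp)

lemma pd_add (i : Fin n) {f g : (Fin n → ℝ) → ℝ} (hf : Differentiable ℝ f)
    (hg : Differentiable ℝ g) (x) : pd i (f + g) x = pd i f x + pd i g x := by
  have e : f + g = fun y => f y + g y := rfl
  have : fderiv ℝ (fun y => f y + g y) x = fderiv ℝ f x + fderiv ℝ g x :=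
    fderiv_add (hf x) (hg x)
  simp [pd, e, this]

lemma pd_smul (i : Fin n) {f : (Fin n → ℝ) → ℝ} (hf : Differentiable ℝ f) (c : ℝ) (x) :
    pd i (c • f) x = c * pd i f x := by
  have e : c • f = fun y => c • f y := rfl
  have : fderiv ℝ (fun y => c • f y) x = c • fderiv ℝ f x := fderiv_const_smul (hf x) c
  show (fderiv ℝ (c • f) x) (Pi.single i 1) = _
  rw [e, this]; rfl

lemma pd_mul (i : Fin n) {f g : (Fin n → ℝ) → ℝ} (hf : Differentiable ℝ f)
    (hg : Differentiable ℝ g) (x) : pd i (f * g) x = pd i f x * g x + f x * pd i g x := by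
  have e : f * g = fun y => f y * g y := rfl
  have : fderiv ℝ (fun y => f y * g y) x = f x • fderiv ℝ g x + g x • fderiv ℝ f x :=
    fderiv_mul (hf x) (hg x)
  simp [pd, e, this]; ring

noncomputable def mon (J : Fin n → ℕ) : (Fin n → ℝ) → ℝ := fun x => ∏ k, x k ^ J k

lemma contDiff_mon (J : Fin n → ℕ) : ContDiff ℝ (⊤ : ℕ∞) (mon J) := by
  have : ∀ t : Finset (Fin n), ContDiff ℝ (⊤ : ℕ∞) (fun x : Fin n → ℝ => ∏ k ∈ t, x k ^ J k) := by
    intro t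
    induction t using Finset.induction with
    | empty => simpa using contDiff_const
    | @insert a t h ih =>
        simp only [Finset.prod_insert h]
        exact (((ContinuousLinearMap.proj _).contDiff).pow _).mul ih
  exact this Finset.univ

lemma hasFDerivAt_coordPow (k : Fin n) (m : ℕ) (x : Fin n → ℝ) :
    HasFDerivAt (fun x : Fin n → ℝ => x k ^ m)
      (((m : ℝ) * x k ^ (m - 1)) • ContinuousLinearMap.proj (R := ℝ)
        (φ := fun _ : Fin n => ℝ) k) x := by
  induction m with
  | zero => simpa using hasFDerivAt_const (1 : ℝ) x
  | succ m ih =>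
      have hk : HasFDerivAt (fun x : Fin n → ℝ => x k)
          (ContinuousLinearMap.proj (R := ℝ) (φ := fun _ : Fin n => ℝ) k) x :=
        hasFDerivAt_apply k x
      have h := ih.mul hk
      have : ((fun x : Fin n → ℝ => x k ^ m) * fun x : Fin n → ℝ => x k) = fun x : Fin n → ℝ => x k ^ (m + 1) := by
        funext y; simp [pow_succ]
      rw [this] at h
      refine h.congr_fderiv ?_
      cases m with
      | zero => ext v; simp
      | succ m => ext v; simp; ring

lemma pd_mon (i : Fin n) (J : Fin n → ℕ) (x : Fin n → ℝ) :
    pd i (mon J) x = (J i : ℝ) * mon (Function.update J i (J i - 1)) x := by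
  classical
  have h : HasFDerivAt (mon J)
      (∑ k, (∏ l ∈ Finset.univ.erase k, x l ^ J l) •
        (((J k : ℝ) * x k ^ (J k - 1)) • ContinuousLinearMap.proj (R := ℝ)
          (φ := fun _ : Fin n => ℝ) k)) x :=
    HasFDerivAt.finset_prod (fun k _ => hasFDerivAt_coordPow k (J k) x)
  have hfd := h.fderiv
  rw [pd, hfd]
  simp only [ContinuousLinearMap.coe_sum', Finset.sum_apply,
    ContinuousLinearMap.coe_smul', Pi.smul_apply, ContinuousLinearMap.proj_apply,
    Pi.single_apply, smul_eq_mul]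
  have hthis : mon (Function.update J i (J i - 1)) x
      = x i ^ (J i - 1) * ∏ l ∈ Finset.univ.erase i, x l ^ J l := by
    rw [mon]
    rw [← Finset.mul_prod_erase Finset.univ _ (Finset.mem_univ i)]
    simp only [Function.update_self]
    congr 1
    exact Finset.prod_congr rfl fun l hl => by
      rw [Function.update_of_ne (Finset.ne_of_mem_erase hl)]
  rw [Finset.sum_eq_single i]
  · simp [hthis]; ring
  · intro b _ hb
    simp [hb]
  · intro h; exact absurd (Finset.mem_univ i) h

lemma pd_iter_mon (i : Fin n) (m : ℕ) (c : ℝ) (J : Fin n → ℕ) :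
    (pd i)^[m] (c • mon J)
      = (c * ((J i).descFactorial m : ℝ)) • mon (Function.update J i (J i - m)) := by
  induction m with
  | zero =>
      simp only [Function.iterate_zero, id_eq, Nat.descFactorial_zero, Nat.cast_one, mul_one,
        Nat.sub_zero]
      rw [Function.update_eq_self i J]
  | succ m ih =>
      rw [Function.iterate_succ_apply', ih]
      funext x
      rw [pd_smul i (diff_of_top (contDiff_mon _)) _ x, pd_mon]
      simp only [Function.update_self, Function.update_idem, Pi.smul_apply, smul_eq_mul]
      rw [Nat.descFactorial_succ, Nat.sub_sub]
      push_cast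
      ring

lemma foldr_mon (I : Fin n → ℕ) (l : List (Fin n)) (hnd : l.Nodup) (c : ℝ) (J : Fin n → ℕ) :
    l.foldr (fun k g => (pd k)^[I k] g) (c • mon J)
      = (c * ∏ k ∈ l.toFinset, ((J k).descFactorial (I k) : ℝ)) •
          mon (fun k => if k ∈ l then J k - I k else J k) := by
  induction l with
  | nil =>
      simp only [List.foldr_nil, List.toFinset_nil, Finset.prod_empty, mul_one,
        List.not_mem_nil, if_false]
  | cons a l ih =>
      obtain ⟨ha, hl⟩ := List.nodup_cons.mp hnd
      rw [List.foldr_cons, ih hl, pd_iter_mon]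
      have hJa : (if a ∈ l then J a - I a else J a) = J a := by simp [ha]
      congr 1
      · rw [List.toFinset_cons, Finset.prod_insert (by simpa using ha), hJa]
        ring
      · have hF : Function.update (fun k => if k ∈ l then J k - I k else J k) a
            ((if a ∈ l then J a - I a else J a) - I a)
            = fun k => if k ∈ a :: l then J k - I k else J k := by
          funext k
          by_cases hk : k = a
          · subst hk
            rw [Function.update_self, hJa]
            simp [List.mem_cons]
          · rw [Function.update_of_ne hk]
            simp [List.mem_cons, hk]
        rw [hF]

lemma mder_mon (I J : Fin n → ℕ) :
    mder I (mon J)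
      = (∏ k, ((J k).descFactorial (I k) : ℝ)) • mon (fun k => J k - I k) := by
  have h := foldr_mon I (List.finRange n) (List.nodup_finRange n) 1 J
  rw [one_smul] at h
  rw [mder, h]
  simp [List.toFinset_finRange, List.mem_finRange]

lemma mon_eval_zero (M : Fin n → ℕ) : mon M 0 = if (∀ k, M k = 0) then 1 else 0 := by
  by_cases h : ∀ k, M k = 0
  · simp [mon, h]
  · push_neg at h
    obtain ⟨k, hk⟩ := h
    rw [if_neg (by push_neg; exact ⟨k, hk⟩)]
    exact Finset.prod_eq_zero (Finset.mem_univ k) (by simp [zero_pow hk])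

lemma mder_mon_eval (I J : Fin n → ℕ) :
    mder I (mon J) 0 = if I = J then (∏ k, ((J k).factorial : ℝ)) else 0 := by
  rw [mder_mon]
  by_cases h : I = J
  · subst h
    simp only [if_pos rfl, Pi.smul_apply, smul_eq_mul]
    rw [mon_eval_zero, if_pos (fun k => Nat.sub_self (I k))]
    simp [Nat.descFactorial_self]
  · rw [if_neg h]
    have : ∃ k, I k ≠ J k := by
      by_contra hc; push_neg at hc; exact h (funext hc)
    obtain ⟨k, hk⟩ := this
    rcases lt_or_gt_of_ne hk with hlt | hgt
    · -- I k < J k : mon factor at k is 0 since J k - I k > 0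
      rw [Pi.smul_apply, smul_eq_mul, mon_eval_zero, if_neg]
      · simp
      · push_neg
        exact ⟨k, Nat.sub_ne_zero_of_lt hlt⟩
    · -- I k > J k : descFactorial = 0
      have : (J k).descFactorial (I k) = 0 := Nat.descFactorial_eq_zero_iff_lt.mpr hgt
      rw [Pi.smul_apply, smul_eq_mul, Finset.prod_eq_zero (Finset.mem_univ k) (by simp [this])]
      simp

lemma pd_comm (i j : Fin n) {f : (Fin n → ℝ) → ℝ} (hf : ContDiff ℝ (⊤ : ℕ∞) f) (x : Fin n → ℝ) :
    pd i (pd j f) x = pd j (pd i f) x := by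
  have hdf : ∀ y, HasFDerivAt f (fderiv ℝ f y) y := fun y =>
    (diff_of_top hf y).hasFDerivAt
  have hcd : ContDiff ℝ (⊤ : ℕ∞) (fderiv ℝ f) := hf.fderiv_right (by simp)
  have hd2 : HasFDerivAt (fderiv ℝ f) (fderiv ℝ (fderiv ℝ f) x) x :=
    (hcd.differentiable (by simp) x).hasFDerivAt
  have hsym := second_derivative_symmetric hdf hd2 (Pi.single i 1) (Pi.single j 1)
  have key : ∀ v w : Fin n → ℝ,
      fderiv ℝ (fun y => fderiv ℝ f y v) x w = fderiv ℝ (fderiv ℝ f) x w v := by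
    intro v w
    have he : (fun y => fderiv ℝ f y v)
        = (ContinuousLinearMap.apply ℝ ℝ v) ∘ (fderiv ℝ f) := rfl
    have hc : HasFDerivAt ((ContinuousLinearMap.apply ℝ ℝ v) ∘ (fderiv ℝ f))
        ((ContinuousLinearMap.apply ℝ ℝ v).comp (fderiv ℝ (fderiv ℝ f) x)) x :=
      (ContinuousLinearMap.apply ℝ ℝ v).hasFDerivAt.comp x hd2
    rw [he, hc.fderiv]
    rfl
  show fderiv ℝ (fun y => fderiv ℝ f y (Pi.single j 1)) x (Pi.single i 1)
      = fderiv ℝ (fun y => fderiv ℝ f y (Pi.single i 1)) x (Pi.single j 1)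
  rw [key, key]
  exact hsym

lemma foldr_single (i : Fin n) (m : ℕ) (f : (Fin n → ℝ) → ℝ) :
    ∀ l : List (Fin n), l.Nodup →
      l.foldr (fun k g => (pd k)^[(Pi.single i m : Fin n → ℕ) k] g) f
        = if i ∈ l then (pd i)^[m] f else f := by
  intro l
  induction l with
  | nil => intro _; simp
  | cons a l ih =>
      intro hnd
      obtain ⟨ha, hl⟩ := List.nodup_cons.mp hnd
      rw [List.foldr_cons, ih hl]
      by_cases hai : a = i
      · subst hai
        rw [if_neg ha, if_pos (List.mem_cons_self (a := a) (l := l))]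
        simp
      · have h0 : (Pi.single i m : Fin n → ℕ) a = 0 := by
          rw [Pi.single_apply, if_neg hai]
        rw [h0]
        simp only [Function.iterate_zero, id_eq]
        by_cases hil : i ∈ l
        · rw [if_pos hil, if_pos (List.mem_cons_of_mem a hil)]
        · rw [if_neg hil, if_neg (fun h => (List.mem_cons.mp h).elim
            (fun h' => hai h'.symm) hil)]

lemma mder_single (i : Fin n) (m : ℕ) (f : (Fin n → ℝ) → ℝ) :
    mder (Pi.single i m) f = (pd i)^[m] f := by
  rw [mder, foldr_single i m f _ (List.nodup_finRange n), if_pos (List.mem_finRange i)]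

lemma foldr_pair {i j : Fin n} (hij : i < j) (f : (Fin n → ℝ) → ℝ) :
    ∀ l : List (Fin n), l.Pairwise (· < ·) →
      l.foldr (fun k g => (pd k)^[(Pi.single i 1 + Pi.single j 1 : Fin n → ℕ) k] g) f
        = (if i ∈ l then pd i else id) ((if j ∈ l then pd j else id) f) := by
  have hne : i ≠ j := ne_of_lt hij
  intro l
  induction l with
  | nil => intro _; simp
  | cons a l ih =>
      intro hpw
      obtain ⟨hab, hl⟩ := List.pairwise_cons.mp hpw
      rw [List.foldr_cons, ih hl]
      by_cases hai : a = i
      · subst hai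
        have hinotl : a ∉ l := fun h => lt_irrefl a (hab a h)
        have hexp : (Pi.single a 1 + Pi.single j 1 : Fin n → ℕ) a = 1 := by
          simp [Pi.single_apply, fun h : a = j => hne h]
        rw [hexp, if_neg hinotl, if_pos (List.mem_cons_self (a := a) (l := l))]
        by_cases hjl : j ∈ l
        · rw [if_pos hjl, if_pos (List.mem_cons_of_mem a hjl)]
          simp
        · rw [if_neg hjl, if_neg (fun h => (List.mem_cons.mp h).elim
            (fun h' => hne h'.symm) hjl)]
          simp
      · by_cases haj : a = j
        · subst haj
          have hjnotl : a ∉ l := fun h => lt_irrefl a (hab a h)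
          have hinotl : i ∉ l := fun h => absurd (hab i h) (not_lt_of_gt hij)
          have hexp : (Pi.single i 1 + Pi.single a 1 : Fin n → ℕ) a = 1 := by
            simp [Pi.single_apply, hai]
          rw [hexp, if_neg hinotl, if_neg hjnotl,
            if_pos (List.mem_cons_self (a := a) (l := l)),
            if_neg (fun h => (List.mem_cons.mp h).elim (fun h' => hai h'.symm) hinotl)]
          simp
        · have hexp : (Pi.single i 1 + Pi.single j 1 : Fin n → ℕ) a = 0 := by
            simp [Pi.single_apply, hai, haj]
          rw [hexp]
          simp only [Function.iterate_zero, id_eq]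
          have e1 : (if i ∈ a :: l then pd i else id)
              = (if i ∈ l then pd i else id) := by
            by_cases hil : i ∈ l
            · rw [if_pos hil, if_pos (List.mem_cons_of_mem a hil)]
            · rw [if_neg hil, if_neg (fun h => (List.mem_cons.mp h).elim
                (fun h' => hai h'.symm) hil)]
          have e2 : (if j ∈ a :: l then pd j else id)
              = (if j ∈ l then pd j else id) := by
            by_cases hjl : j ∈ l
            · rw [if_pos hjl, if_pos (List.mem_cons_of_mem a hjl)]
            · rw [if_neg hjl, if_neg (fun h => (List.mem_cons.mp h).elim
                (fun h' => haj h'.symm) hjl)]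
          rw [e1, e2]

lemma mder_pair {i j : Fin n} (hij : i < j) (f : (Fin n → ℝ) → ℝ) :
    mder (Pi.single i 1 + Pi.single j 1) f = pd i (pd j f) := by
  rw [mder, foldr_pair hij f _ (List.pairwise_lt_finRange n),
    if_pos (List.mem_finRange i), if_pos (List.mem_finRange j)]

lemma mder_e (i : Fin n) (f : (Fin n → ℝ) → ℝ) : mder (Pi.single i 1) f = pd i f := by
  rw [mder_single]; rfl

lemma mder_pair_eval (i j : Fin n) {f : (Fin n → ℝ) → ℝ} (hf : ContDiff ℝ (⊤ : ℕ∞) f) :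
    mder (Pi.single i 1 + Pi.single j 1) f 0 = pd i (pd j f) 0 := by
  rcases lt_trichotomy i j with h | h | h
  · rw [mder_pair h]
  · subst h
    have h2 : (Pi.single i 1 + Pi.single i 1 : Fin n → ℕ) = Pi.single i 2 := by
      funext k
      simp only [Pi.add_apply, Pi.single_apply]
      split <;> simp
    rw [h2, mder_single]
    rfl
  · have hcomm : (Pi.single i 1 + Pi.single j 1 : Fin n → ℕ)
        = Pi.single j 1 + Pi.single i 1 := add_comm _ _
    rw [hcomm, mder_pair h, pd_comm j i hf]

lemma pdpd_mul (i j : Fin n) {f g : (Fin n → ℝ) → ℝ} (hf : ContDiff ℝ (⊤ : ℕ∞) f)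
    (hg : ContDiff ℝ (⊤ : ℕ∞) g) :
    pd i (pd j (f * g)) 0 = pd i (pd j f) 0 * g 0 + pd j f 0 * pd i g 0
      + pd i f 0 * pd j g 0 + f 0 * pd i (pd j g) 0 := by
  have hd1 : Differentiable ℝ (pd j f * g) := diff_of_top ((contDiff_pd j hf).mul hg)
  have hd2 : Differentiable ℝ (f * pd j g) := diff_of_top (hf.mul (contDiff_pd j hg))
  have h1 : pd j (f * g) = pd j f * g + f * pd j g :=
    funext fun x => pd_mul j (diff_of_top hf) (diff_of_top hg) x
  rw [h1, pd_add i hd1 hd2,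
    pd_mul i (diff_of_top (contDiff_pd j hf)) (diff_of_top hg),
    pd_mul i (diff_of_top hf) (diff_of_top (contDiff_pd j hg))]
  ring

lemma q_mul (D₁ : Fin n → ℝ) {f g : (Fin n → ℝ) → ℝ} (hf : ContDiff ℝ (⊤ : ℕ∞) f)
    (hg : ContDiff ℝ (⊤ : ℕ∞) g) :
    (1/2 : ℝ) * ∑ i, ∑ j, D₁ i * D₁ j * pd i (pd j (f * g)) 0
      = (∑ k, D₁ k * pd k f 0) * (∑ k, D₁ k * pd k g 0)
        + ((1/2 : ℝ) * ∑ i, ∑ j, D₁ i * D₁ j * pd i (pd j f) 0) * g 0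
        + f 0 * ((1/2 : ℝ) * ∑ i, ∑ j, D₁ i * D₁ j * pd i (pd j g) 0) := by
  have hstep : ∑ i, ∑ j, D₁ i * D₁ j * pd i (pd j (f * g)) 0
      = ∑ i, ∑ j, ((D₁ i * D₁ j * pd i (pd j f) 0) * g 0
          + (D₁ i * pd i g 0) * (D₁ j * pd j f 0)
          + (D₁ i * pd i f 0) * (D₁ j * pd j g 0)
          + f 0 * (D₁ i * D₁ j * pd i (pd j g) 0)) :=
    Finset.sum_congr rfl fun i _ => Finset.sum_congr rfl fun j _ => by
      rw [pdpd_mul i j hf hg]; ring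
  have e1 : ∑ i, ∑ j, (D₁ i * D₁ j * pd i (pd j f) 0) * g 0
      = (∑ i, ∑ j, D₁ i * D₁ j * pd i (pd j f) 0) * g 0 := by
    rw [Finset.sum_mul]
    exact Finset.sum_congr rfl fun i _ => (Finset.sum_mul _ _ _).symm
  have e4 : ∑ i, ∑ j, f 0 * (D₁ i * D₁ j * pd i (pd j g) 0)
      = f 0 * ∑ i, ∑ j, D₁ i * D₁ j * pd i (pd j g) 0 := by
    rw [Finset.mul_sum]
    exact Finset.sum_congr rfl fun i _ => (Finset.mul_sum _ _ _).symm
  have e2 : ∑ i, ∑ j, (D₁ i * pd i g 0) * (D₁ j * pd j f 0)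
      = (∑ i, D₁ i * pd i g 0) * (∑ j, D₁ j * pd j f 0) :=
    (Finset.sum_mul_sum _ _ _ _).symm
  have e3 : ∑ i, ∑ j, (D₁ i * pd i f 0) * (D₁ j * pd j g 0)
      = (∑ i, D₁ i * pd i f 0) * (∑ j, D₁ j * pd j g 0) :=
    (Finset.sum_mul_sum _ _ _ _).symm
  rw [hstep]
  simp only [Finset.sum_add_distrib]
  rw [e1, e2, e3, e4]
  ring


lemma mon_add (P Q : Fin n → ℕ) : mon (P + Q) = mon P * mon Q := by
  funext x
  simp [mon, pow_add, Finset.prod_mul_distrib]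

lemma pd_mon_eval (i : Fin n) (J : Fin n → ℕ) :
    pd i (mon J) 0
      = if (Pi.single i 1 : Fin n → ℕ) = J then ∏ k, ((J k).factorial : ℝ) else 0 := by
  rw [← mder_e, mder_mon_eval]

lemma prod_factorial_single (k : Fin n) :
    (∏ l, (((Pi.single k 1 : Fin n → ℕ) l).factorial : ℝ)) = 1 := by
  rw [Finset.prod_eq_one]
  intro l _
  by_cases hl : l = k
  · subst hl; simp
  · simp [Pi.single_apply, hl]

/-- Let `φ₁(f) = Σ_k D₁^k (∂_k f)(0)` and let `φ₂` be a
differential operator at `0` (finite linear combination of partial derivatives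
at `0`) satisfying `φ₂(fg) = φ₁(f)φ₁(g) + φ₂(f) g(0) + f(0) φ₂(g)`.  Then
`φ₂(f) = ½ Σ_{i,j} D₁^i D₁^j (∂_i ∂_j f)(0) + Σ_i D₂^i (∂_i f)(0)` for some
constants `D₂^i`. -/
theorem stmt_11 (n : ℕ) (D₁ : Fin n → ℝ) (φ₁ φ₂ : ((Fin n → ℝ) → ℝ) → ℝ)
    (hφ₁ : ∀ f : (Fin n → ℝ) → ℝ, φ₁ f = ∑ k, D₁ k * pd k f 0)
    (hform : ∃ (s : Finset (Fin n → ℕ)) (c : (Fin n → ℕ) → ℝ),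
      ∀ f : (Fin n → ℝ) → ℝ, ContDiff ℝ (⊤ : ℕ∞) f →
        φ₂ f = ∑ I ∈ s, c I * mder I f 0)
    (hder : ∀ f g : (Fin n → ℝ) → ℝ, ContDiff ℝ (⊤ : ℕ∞) f → ContDiff ℝ (⊤ : ℕ∞) g →
      φ₂ (f * g) = φ₁ f * φ₁ g + φ₂ f * g 0 + f 0 * φ₂ g) :
    ∃ D₂ : Fin n → ℝ, ∀ f : (Fin n → ℝ) → ℝ, ContDiff ℝ (⊤ : ℕ∞) f →
      φ₂ f = (1 / 2) * ∑ i, ∑ j, D₁ i * D₁ j * pd i (pd j f) 0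
        + ∑ i, D₂ i * pd i f 0 := by
  classical
  obtain ⟨s, c, hc⟩ := hform
  set q : ((Fin n → ℝ) → ℝ) → ℝ :=
    fun f => (1/2 : ℝ) * ∑ i, ∑ j, D₁ i * D₁ j * pd i (pd j f) 0 with hq
  set D₂ : Fin n → ℝ :=
    fun i => φ₂ (mon (Pi.single i 1)) - q (mon (Pi.single i 1)) with hD₂def
  set E2 : Fin n × Fin n → (Fin n → ℕ) :=
    fun p => Pi.single p.1 1 + Pi.single p.2 1 with hE2
  refine ⟨D₂, fun f hf => ?_⟩
  -- the "first-order deformation" ψ = φ₂ - q obeys the Leibniz rule at 0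
  have hψ : ∀ u v : (Fin n → ℝ) → ℝ, ContDiff ℝ (⊤ : ℕ∞) u → ContDiff ℝ (⊤ : ℕ∞) v →
      φ₂ (u * v) - q (u * v) = (φ₂ u - q u) * v 0 + u 0 * (φ₂ v - q v) := by
    intro u v hu hv
    have h2 := q_mul D₁ hu hv
    have hquv : q (u * v) = (∑ k, D₁ k * pd k u 0) * (∑ k, D₁ k * pd k v 0)
        + q u * v 0 + u 0 * q v := by
      simp only [hq]
      rw [h2]
    rw [hder u v hu hv, hφ₁ u, hφ₁ v, hquv]
    ring
  have hone : ContDiff ℝ (⊤ : ℕ∞) (1 : (Fin n → ℝ) → ℝ) := contDiff_const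
  have hψ1 : φ₂ 1 - q 1 = 0 := by
    have h := hψ 1 1 hone hone
    rw [one_mul] at h
    simp only [Pi.one_apply, mul_one, one_mul] at h
    linarith
  have hmon0 : mon (0 : Fin n → ℕ) = 1 := by funext x; simp [mon]
  -- ψ kills monomials of degree ≥ 2
  have hψmon : ∀ J : Fin n → ℕ, J ≠ 0 → (∀ k, J ≠ Pi.single k 1) →
      φ₂ (mon J) - q (mon J) = 0 := by
    intro J hJ0 hJ1
    obtain ⟨k, hk⟩ : ∃ k, J k ≠ 0 := by
      by_contra h; push_neg at h; exact hJ0 (funext h)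
    set B : Fin n → ℕ := fun l => J l - (Pi.single k 1 : Fin n → ℕ) l with hB
    have hJsum : J = Pi.single k 1 + B := by
      funext l
      by_cases hlk : l = k
      · subst hlk
        simp only [Pi.add_apply, hB, Pi.single_eq_same]
        omega
      · simp [hB, Pi.single_apply, hlk]
    have hmul : mon J = mon (Pi.single k 1) * mon B := by rw [hJsum, mon_add]
    have hA0 : mon (Pi.single k 1 : Fin n → ℕ) 0 = 0 := by
      rw [mon_eval_zero, if_neg]
      push_neg
      exact ⟨k, by simp⟩
    have hB0 : mon B 0 = 0 := by
      rw [mon_eval_zero, if_neg]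
      intro hall
      apply hJ1 k
      funext l
      have := congrFun hJsum l
      rw [this, Pi.add_apply, hall l, add_zero]
    have h := hψ (mon (Pi.single k 1)) (mon B) (contDiff_mon _) (contDiff_mon _)
    rw [← hmul] at h
    rw [h, hA0, hB0]
    ring
  -- bookkeeping: merge everything into a single linear combination
  set c' : (Fin n → ℕ) → ℝ := fun I =>
    (if I ∈ s then c I else 0)
      - (1/2 : ℝ) * (∑ p : Fin n × Fin n, if I = E2 p then D₁ p.1 * D₁ p.2 else 0)
      - (∑ i, if I = (Pi.single i 1 : Fin n → ℕ) then D₂ i else 0) with hc'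
  set s' : Finset (Fin n → ℕ) :=
    (s ∪ Finset.image E2 Finset.univ)
      ∪ Finset.image (fun i => (Pi.single i 1 : Fin n → ℕ)) Finset.univ with hs'
  have hsub : s ⊆ s' := fun I hI =>
    Finset.mem_union_left _ (Finset.mem_union_left _ hI)
  have hmemE2 : ∀ p : Fin n × Fin n, E2 p ∈ s' := fun p =>
    Finset.mem_union_left _ (Finset.mem_union_right _
      (Finset.mem_image_of_mem E2 (Finset.mem_univ p)))
  have hmemE1 : ∀ i : Fin n, (Pi.single i 1 : Fin n → ℕ) ∈ s' := fun i =>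
    Finset.mem_union_right _ (Finset.mem_image_of_mem _ (Finset.mem_univ i))
  have key1 : ∀ u : (Fin n → ℝ) → ℝ, ContDiff ℝ (⊤ : ℕ∞) u →
      ∑ I ∈ s', c' I * mder I u 0 = φ₂ u - q u - ∑ i, D₂ i * pd i u 0 := by
    intro u hu
    have t1 : ∑ I ∈ s', (if I ∈ s then c I else 0) * mder I u 0 = φ₂ u := by
      rw [hc u hu]
      rw [← Finset.sum_subset hsub (fun I _ hIs => by rw [if_neg hIs, zero_mul])]
      exact Finset.sum_congr rfl fun I hI => by rw [if_pos hI]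
    have t2 : ∑ I ∈ s',
        (∑ p : Fin n × Fin n, if I = E2 p then D₁ p.1 * D₁ p.2 else 0) * mder I u 0
          = ∑ i, ∑ j, D₁ i * D₁ j * pd i (pd j u) 0 := by
      have : ∀ I, (∑ p : Fin n × Fin n, if I = E2 p then D₁ p.1 * D₁ p.2 else 0)
          * mder I u 0
          = ∑ p : Fin n × Fin n,
              if I = E2 p then D₁ p.1 * D₁ p.2 * mder I u 0 else 0 := by
        intro I
        rw [Finset.sum_mul]
        exact Finset.sum_congr rfl fun p _ => by rw [ite_mul, zero_mul]
      rw [Finset.sum_congr rfl fun I _ => this I, Finset.sum_comm]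
      have hpt : ∀ p : Fin n × Fin n,
          (∑ I ∈ s', if I = E2 p then D₁ p.1 * D₁ p.2 * mder I u 0 else 0)
            = D₁ p.1 * D₁ p.2 * pd p.1 (pd p.2 u) 0 := by
        intro p
        rw [Finset.sum_ite_eq' s' (E2 p)
          (fun I => D₁ p.1 * D₁ p.2 * mder I u 0), if_pos (hmemE2 p)]
        rw [hE2]
        rw [mder_pair_eval p.1 p.2 hu]
      rw [Finset.sum_congr rfl fun p _ => hpt p, Fintype.sum_prod_type]
    have t3 : ∑ I ∈ s',
        (∑ i, if I = (Pi.single i 1 : Fin n → ℕ) then D₂ i else 0) * mder I u 0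
          = ∑ i, D₂ i * pd i u 0 := by
      have : ∀ I, (∑ i, if I = (Pi.single i 1 : Fin n → ℕ) then D₂ i else 0)
          * mder I u 0
          = ∑ i, if I = (Pi.single i 1 : Fin n → ℕ) then D₂ i * mder I u 0 else 0 := by
        intro I
        rw [Finset.sum_mul]
        exact Finset.sum_congr rfl fun i _ => by rw [ite_mul, zero_mul]
      rw [Finset.sum_congr rfl fun I _ => this I, Finset.sum_comm]
      refine Finset.sum_congr rfl fun i _ => ?_
      rw [Finset.sum_ite_eq' s' (Pi.single i 1 : Fin n → ℕ)
        (fun I => D₂ i * mder I u 0), if_pos (hmemE1 i), mder_e]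
    calc ∑ I ∈ s', c' I * mder I u 0
        = ∑ I ∈ s', ((if I ∈ s then c I else 0) * mder I u 0
            - (1/2 : ℝ) * ((∑ p : Fin n × Fin n,
                if I = E2 p then D₁ p.1 * D₁ p.2 else 0) * mder I u 0)
            - (∑ i, if I = (Pi.single i 1 : Fin n → ℕ) then D₂ i else 0)
                * mder I u 0) := by
          refine Finset.sum_congr rfl fun I _ => ?_
          rw [hc']
          ring
      _ = φ₂ u - q u - ∑ i, D₂ i * pd i u 0 := by
          rw [Finset.sum_sub_distrib, Finset.sum_sub_distrib, t1, t3,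
            ← Finset.mul_sum, t2, hq]
  -- evaluating on monomials shows all merged coefficients vanish
  have key3 : ∀ J ∈ s', c' J = 0 := by
    intro J hJ
    have h0 := key1 (mon J) (contDiff_mon J)
    have hsumpd : ∑ i, D₂ i * pd i (mon J) 0
        = ∑ i, D₂ i * (if (Pi.single i 1 : Fin n → ℕ) = J then
            ∏ k, ((J k).factorial : ℝ) else 0) :=
      Finset.sum_congr rfl fun i _ => by rw [pd_mon_eval]
    have hR : φ₂ (mon J) - q (mon J) - ∑ i, D₂ i * pd i (mon J) 0 = 0 := by
      by_cases hJ0 : J = 0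
      · subst hJ0
        rw [hsumpd, Finset.sum_eq_zero fun i _ => by
          rw [if_neg (fun h => by simpa using congrFun h i), mul_zero]]
        rw [hmon0, hψ1]
        ring
      · by_cases hJ1 : ∃ k, J = Pi.single k 1
        · obtain ⟨k, rfl⟩ := hJ1
          have hsingle_inj : ∀ i : Fin n,
              (Pi.single i 1 : Fin n → ℕ) = Pi.single k 1 → i = k := by
            intro i h
            by_contra hik
            have := congrFun h i
            rw [Pi.single_eq_same, Pi.single_apply, if_neg hik] at this
            exact one_ne_zero this
          rw [hsumpd, Finset.sum_eq_single k]
          · rw [if_pos rfl, prod_factorial_single, mul_one, hD₂def]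
            ring
          · intro i _ hik
            rw [if_neg (fun h => hik (hsingle_inj i h)), mul_zero]
          · intro h; exact absurd (Finset.mem_univ k) h
        · push_neg at hJ1
          rw [hsumpd, Finset.sum_eq_zero fun i _ => by
            rw [if_neg (fun h => hJ1 i h.symm), mul_zero]]
          rw [hψmon J hJ0 hJ1]
          ring
    rw [hR] at h0
    have hLHS : ∑ I ∈ s', c' I * mder I (mon J) 0
        = c' J * ∏ k, ((J k).factorial : ℝ) := by
      rw [Finset.sum_eq_single J]
      · rw [mder_mon_eval, if_pos rfl]
      · intro I _ hIJ
        rw [mder_mon_eval, if_neg hIJ, mul_zero]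
      · intro h; exact absurd hJ h
    rw [hLHS] at h0
    have hfac : (∏ k, ((J k).factorial : ℝ)) ≠ 0 :=
      Finset.prod_ne_zero_iff.mpr fun k _ => Nat.cast_ne_zero.mpr (J k).factorial_ne_zero
    exact (mul_eq_zero.mp h0).resolve_right hfac
  have hzero : ∑ I ∈ s', c' I * mder I f 0 = 0 :=
    Finset.sum_eq_zero fun I hI => by rw [key3 I hI, zero_mul]
  have hfinal := key1 f hf
  rw [hzero] at hfinal
  simp only [hq] at hfinal
  linarith
end

section
/- Let h = k ⊕ k with nonzero brackets [e₁,e₂]=e₂, [e₃,e₄]=e₄, acting on itself by the adjoint action. Then H²(h,h) = {0}. -/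
/-!
Write `h = 𝔞 ⊕ 𝔞` with basis `b 0, b 1` of the first copy and `b 2, b 3` of the second. Then
`ad (b 0)` and `ad (b 2)` are rank-one maps onto `b 1` and `b 3`, so the cocycle identity on the
four triples of basis vectors becomes twelve linear relations between the structure constants
`r i j m` of a 2-cocycle `c`: the mixed values `c (b i) (b j)`, `i ∈ {0, 1}`, `j ∈ {2, 3}`, lie in
`span {b 1, b 3} = [h, h]`, and four further constants are tied together. Comparing coordinates in
`c = d l` determines twelve entries of the matrix of `l`; the twelve relations are exactly the
consistency conditions of this linear system, and the remaining four entries can be taken `0`.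
-/

open Module LieModule.Cohomology

variable {R L M : Type*} [CommRing R] [LieRing L] [LieAlgebra R L] [AddCommGroup M] [Module R M]

theorem LieModule.Cohomology.twoCochain_ext_basis_of_lt {ι : Type*} [LinearOrder ι]
    (b : Basis ι R L) {a a' : twoCochain R L M}
    (h : ∀ i j, i < j → a (b i) (b j) = a' (b i) (b j)) : a = a' := by
  refine Subtype.ext <| LinearMap.ext_basis b b fun i j =>
    show a (b i) (b j) = a' (b i) (b j) from ?_
  rcases lt_trichotomy i j with hij | rfl | hji
  · exact h i j hij
  · rw [twoCochain_alt, twoCochain_alt]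
  · rw [← twoCochain_skew a, ← twoCochain_skew a', h j i hji]

/-- `b` is a basis of `𝔞 ⊕ 𝔞`, `𝔞` the two-dimensional non-abelian Lie algebra. -/
structure IsAffSumBasis (b : Basis (Fin 4) R L) : Prop where
  lie_zero_one : ⁅b 0, b 1⁆ = b 1
  lie_two_three : ⁅b 2, b 3⁆ = b 3
  lie_zero_two : ⁅b 0, b 2⁆ = 0
  lie_zero_three : ⁅b 0, b 3⁆ = 0
  lie_one_two : ⁅b 1, b 2⁆ = 0
  lie_one_three : ⁅b 1, b 3⁆ = 0

namespace IsAffSumBasis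

variable {b : Basis (Fin 4) R L}

lemma lie_basis_zero (hb : IsAffSumBasis b) (v : L) : ⁅b 0, v⁆ = b.repr v 1 • b 1 := by
  have : (LieAlgebra.ad R L (b 0) : L →ₗ[R] L) = (b.coord 1).smulRight (b 1) := b.ext fun i => by
    fin_cases i <;> simp [hb.lie_zero_one, hb.lie_zero_two, hb.lie_zero_three]
  simpa using LinearMap.congr_fun this v

lemma lie_basis_one (hb : IsAffSumBasis b) (v : L) : ⁅b 1, v⁆ = -(b.repr v 0 • b 1) := by
  have : (LieAlgebra.ad R L (b 1) : L →ₗ[R] L) = -(b.coord 0).smulRight (b 1) := b.ext fun i => by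
    fin_cases i <;> simp [← lie_skew (b 1) (b 0), hb.lie_zero_one, hb.lie_one_two, hb.lie_one_three]
  simpa using LinearMap.congr_fun this v

lemma lie_basis_two (hb : IsAffSumBasis b) (v : L) : ⁅b 2, v⁆ = b.repr v 3 • b 3 := by
  have : (LieAlgebra.ad R L (b 2) : L →ₗ[R] L) = (b.coord 3).smulRight (b 3) := b.ext fun i => by
    fin_cases i <;> simp [← lie_skew (b 2) (b 0), ← lie_skew (b 2) (b 1), hb.lie_zero_two,
      hb.lie_one_two, hb.lie_two_three]
  simpa using LinearMap.congr_fun this v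

lemma lie_basis_three (hb : IsAffSumBasis b) (v : L) : ⁅b 3, v⁆ = -(b.repr v 2 • b 3) := by
  have : (LieAlgebra.ad R L (b 3) : L →ₗ[R] L) = -(b.coord 2).smulRight (b 3) := b.ext fun i => by
    fin_cases i <;> simp [← lie_skew (b 3) (b 0), ← lie_skew (b 3) (b 1), ← lie_skew (b 3) (b 2),
      hb.lie_zero_three, hb.lie_one_three, hb.lie_two_three]
  simpa using LinearMap.congr_fun this v

theorem repr_relations_of_mem_twoCocycle (hb : IsAffSumBasis b) {a : twoCochain R L L}
    (ha : a ∈ twoCocycle R L L) {r : Fin 4 → Fin 4 → Fin 4 → R}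
    (hr : ∀ i j m, b.repr (a (b i) (b j)) m = r i j m) :
    r 0 2 0 = 0 ∧ r 0 2 2 = 0 ∧ r 0 3 0 = 0 ∧ r 0 3 2 = 0 ∧
    r 1 2 0 = 0 ∧ r 1 2 2 = 0 ∧ r 1 3 0 = 0 ∧ r 1 3 2 = 0 ∧
    r 1 2 3 = r 0 1 3 ∧ r 1 3 3 = -r 0 1 2 ∧ r 2 3 0 = r 1 3 1 ∧ r 2 3 1 = -r 0 3 1 := by
  have coord (i j k : Fin 4) : ∀ m, b.repr (d₂₃ R L L a (b i) (b j) (b k)) m = 0 := fun m => by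
    simp [(mem_twoCocycle_iff R L L a).1 ha]
  have h012 := coord 0 1 2
  have h013 := coord 0 1 3
  have h023 := coord 0 2 3
  have h123 := coord 1 2 3
  simp only [Fin.forall_fin_succ] at h012 h013 h023 h123
  simp [hb.lie_basis_zero, hb.lie_basis_one, hb.lie_basis_two, hb.lie_basis_three,
    ← twoCochain_skew a (b 0) (b 3), ← twoCochain_skew a (b 1) (b 3), hr] at h012 h013 h023 h123
  grind

theorem twoCocycle_le_range_d₁₂ (hb : IsAffSumBasis b) :
    twoCocycle R L L ≤ LinearMap.range (d₁₂ R L L) := by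
  intro a ha
  obtain ⟨r, hr⟩ : ∃ r : Fin 4 → Fin 4 → Fin 4 → R, ∀ i j m, b.repr (a (b i) (b j)) m = r i j m :=
    ⟨_, fun _ _ _ => rfl⟩
  obtain ⟨h020, h022, h030, h032, h120, h122, h130, h132, h123, h133, h230, h231⟩ :=
    hb.repr_relations_of_mem_twoCocycle ha hr
  -- `F m j` is the `b m`-coordinate of `f (b j)`; each nonzero entry is forced by one coordinate
  -- of `d₁₂ f (b i) (b j) = a (b i) (b j)`.
  let F : Matrix (Fin 4) (Fin 4) R :=
    !![r 0 1 1, -r 0 1 0, -r 1 2 1, -r 1 3 1;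
       0, 0, r 0 2 1, r 0 3 1;
       r 0 3 3, -r 0 1 2, r 2 3 3, -r 2 3 2;
       -r 0 2 3, -r 0 1 3, 0, 0]
  obtain ⟨f, hf⟩ : ∃ f : L →ₗ[R] L, ∀ j m, b.repr (f (b j)) m = F m j :=
    ⟨Matrix.toLin b b F, fun j m => by rw [← LinearMap.toMatrix_apply, LinearMap.toMatrix_toLin]⟩
  refine ⟨f, twoCochain_ext_basis_of_lt b fun i j hij => b.ext_elem fun m => ?_⟩
  fin_cases i <;> fin_cases j <;> simp only [Fin.reduceFinMk, Fin.reduceLT] at hij <;>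
    fin_cases m <;>
    simp [hf, hb.lie_basis_zero, hb.lie_basis_one, hb.lie_basis_two, hb.lie_basis_three, hr, F,
      h020, h022, h030, h032, h120, h122, h130, h132, h123, h133, h230, h231]

end IsAffSumBasis

/-- For `h = k ⊕ k` (basis `e₁,…,e₄`, nonzero brackets
`⁅e₁,e₂⁆ = e₂`, `⁅e₃,e₄⁆ = e₄`) acting on itself by the adjoint action,
`H²(h,h) = {0}`: every alternating bilinear 2-cocycle `c : h × h → h`
(Chevalley–Eilenberg cocycle condition for the adjoint module) is the
coboundary `c(x,y) = ⁅x, l y⁆ - ⁅y, l x⁆ - l ⁅x,y⁆` of a linear map `l`. -/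
theorem stmt_15 (H : Type) [LieRing H] [LieAlgebra ℝ H]
    (b : Module.Basis (Fin 4) ℝ H)
    (h12 : ⁅b 0, b 1⁆ = b 1) (h34 : ⁅b 2, b 3⁆ = b 3)
    (h13 : ⁅b 0, b 2⁆ = 0) (h14 : ⁅b 0, b 3⁆ = 0)
    (h23 : ⁅b 1, b 2⁆ = 0) (h24 : ⁅b 1, b 3⁆ = 0) :
    ∀ c : H →ₗ[ℝ] H →ₗ[ℝ] H, (∀ x : H, c x x = 0) →
      (∀ x y z : H,
        ⁅x, c y z⁆ - ⁅y, c x z⁆ + ⁅z, c x y⁆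
          - c ⁅x, y⁆ z + c ⁅x, z⁆ y - c ⁅y, z⁆ x = 0) →
      ∃ l : H →ₗ[ℝ] H, ∀ x y : H,
        c x y = ⁅x, l y⁆ - ⁅y, l x⁆ - l ⁅x, y⁆ := by
  intro c hc hcoc
  have hcocycle : ⟨c, hc⟩ ∈ twoCocycle ℝ H H :=
    (mem_twoCocycle_iff ℝ H H _).2 <| by ext x y z; exact hcoc x y z
  obtain ⟨l, hl⟩ :=
    IsAffSumBasis.twoCocycle_le_range_d₁₂ ⟨h12, h34, h13, h14, h23, h24⟩ hcocycle
  exact ⟨l, fun x y => by rw [← d₁₂_apply_apply, hl]; rfl⟩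
end
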